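/- Let K ⊆ L be a separable field extension of degree 2 with char K ≠ 2, and let f be the nontrivial element of Gal(L/K). Suppose δ ∈ L satisfies δ² ∈ K and L = K(δ), and let d ∈ PSL₂(L) be the image of diag(δ, δ^{-1}). Then d is fixed by the induced action of f on PSL₂(L), the subgroup ⟨PSL₂(K), d⟩ of PSL₂(L) contains PSL₂(K) as a subgroup of index 2, and the fixed-point subgroup of f acting on PSL₂(L) equals ⟨PSL₂(K), d⟩. -/

import Mathlib

/-!
As `δ² ∈ K` and `δ` generates `L`, every element of `L` is `a + bδ` with `a, b ∈ K`, the
nontrivial automorphism sends `δ` to `-δ`, and (as `2 ≠ 0`) its fixed field is `K`. A class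
`±A ∈ PSL₂(L)` is fixed by `f` iff `f(A) = A`, i.e. `A ∈ SL₂(K)`, or `f(A) = -A`; in the second
case `f(A·D) = (-A)(-D) = A·D` for `D = diag(δ, δ⁻¹)`, so `A·D ∈ SL₂(K)`. Finally `d ∉ PSL₂(K)`
because `δ ∉ K`, which gives index 2.
-/

open Matrix

variable (F : Type*) [Field F]

/-- `SL₂(F)`. -/
abbrev SL2 := Matrix.SpecialLinearGroup (Fin 2) F

/-- `PSL₂(F) = SL₂(F)/{±I}` (the center of `SL₂(F)`). -/
abbrev PSL2 := SL2 F ⧸ Subgroup.center (SL2 F)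

variable {F} in
/-- The diagonal matrix `diag(t, t⁻¹)` as an element of `SL₂(F)`. -/
def sl2diag (t : Fˣ) : SL2 F :=
  ⟨!![(t : F), 0; 0, ((t⁻¹ : Fˣ) : F)], by simp [Matrix.det_fin_two_of]⟩

variable {F} in
lemma center_le_comap (σ : F →+* F) :
    Subgroup.center (SL2 F) ≤
      Subgroup.comap (Matrix.SpecialLinearGroup.map σ) (Subgroup.center (SL2 F)) := by
  intro A hA
  rw [Subgroup.mem_comap, Matrix.SpecialLinearGroup.mem_center_iff] at *
  obtain ⟨r, hr, hrA⟩ := hA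
  refine ⟨σ r, by rw [← map_pow, hr, _root_.map_one], ?_⟩
  have : ((Matrix.SpecialLinearGroup.map σ A : SL2 F) : Matrix (Fin 2) (Fin 2) F)
      = (A : Matrix (Fin 2) (Fin 2) F).map σ := rfl
  rw [this, ← hrA]
  ext i j
  by_cases h : i = j <;>
    simp [Matrix.scalar_apply, Matrix.diagonal_apply, Matrix.map_apply, h]

variable {F} in
/-- The action of a field endomorphism `σ` of `F` on `PSL₂(F)`, induced by the
entrywise action on `SL₂(F)`. -/
def psl2Map (σ : F →+* F) : PSL2 F →* PSL2 F :=
  QuotientGroup.map _ _ (Matrix.SpecialLinearGroup.map σ) (center_le_comap σ)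

/-- `PSL₂(K)` viewed as a subgroup of `PSL₂(L)` via the inclusion `K ⊆ L`. -/
def pslK (K L : Type*) [Field K] [Field L] [Algebra K L] : Subgroup (PSL2 L) :=
  ((QuotientGroup.mk' (Subgroup.center (SL2 L))).comp
    (Matrix.SpecialLinearGroup.map (algebraMap K L))).range

lemma eq_zero_of_eq_neg {R : Type*} [Ring R] [NoZeroDivisors R] (h2 : (2 : R) ≠ 0) {a : R}
    (h : a = -a) : a = 0 :=
  (mul_eq_zero.mp ((two_mul a).trans (eq_neg_iff_add_eq_zero.mp h))).resolve_left h2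

section QuadraticGenerator

variable {K L : Type*} [Field K] [Field L] [Algebra K L] {δ : L} {c : K}

lemma exists_eq_algebraMap_add_algebraMap_mul (hc : algebraMap K L c = δ ^ 2)
    (hgen : Algebra.adjoin K {δ} = ⊤) (x : L) :
    ∃ a b : K, x = algebraMap K L a + algebraMap K L b * δ := by
  have hx : x ∈ Algebra.adjoin K {δ} := hgen ▸ Algebra.mem_top
  induction hx using Algebra.adjoin_induction with
  | mem x hx => exact ⟨0, 1, by simp [Set.mem_singleton_iff.mp hx]⟩
  | algebraMap a => exact ⟨a, 0, by simp⟩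
  | add x y _ _ hx hy =>
    obtain ⟨a, b, rfl⟩ := hx
    obtain ⟨a', b', rfl⟩ := hy
    exact ⟨a + a', b + b', by simp only [map_add]; ring⟩
  | mul x y _ _ hx hy =>
    obtain ⟨a, b, rfl⟩ := hx
    obtain ⟨a', b', rfl⟩ := hy
    refine ⟨a * a' + b * b' * c, a * b' + a' * b, ?_⟩
    simp only [map_add, map_mul, hc]
    ring

namespace AlgEquiv

variable {f : L ≃ₐ[K] L}

lemma apply_eq_neg_of_ne_refl (hf : f ≠ AlgEquiv.refl) (hc : algebraMap K L c = δ ^ 2)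
    (hgen : Algebra.adjoin K {δ} = ⊤) : f δ = -δ := by
  have hsq : f δ ^ 2 = δ ^ 2 := by rw [← map_pow, ← hc, f.commutes]
  refine (sq_eq_sq_iff_eq_or_eq_neg.mp hsq).resolve_left fun hfix ↦ hf ?_
  exact AlgEquiv.coe_toAlgHom_injective <|
    AlgHom.ext_of_adjoin_eq_top hgen (by simpa [Set.eqOn_singleton] using hfix)

lemma mem_range_algebraMap_of_apply_eq_self (h2 : (2 : L) ≠ 0) (hfδ : f δ = -δ)
    (hc : algebraMap K L c = δ ^ 2) (hgen : Algebra.adjoin K {δ} = ⊤) {x : L} (hx : f x = x) :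
    x ∈ (algebraMap K L).range := by
  obtain ⟨a, b, rfl⟩ := exists_eq_algebraMap_add_algebraMap_mul hc hgen x
  rw [map_add, map_mul, f.commutes, f.commutes, hfδ] at hx
  have hb : algebraMap K L b * δ = 0 := eq_zero_of_eq_neg h2 (by linear_combination -hx)
  exact ⟨a, by rw [hb, add_zero]⟩

lemma notMem_range_algebraMap_of_apply_eq_neg (h2 : (2 : L) ≠ 0) (hδ : δ ≠ 0)
    (hfδ : f δ = -δ) : δ ∉ (algebraMap K L).range := by
  rintro ⟨a, rfl⟩
  exact hδ (eq_zero_of_eq_neg h2 (by rwa [f.commutes] at hfδ))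

end AlgEquiv

end QuadraticGenerator

namespace Matrix.SpecialLinearGroup

lemma exists_map_eq_of_forall_mem_range {n R S : Type*} [Fintype n] [DecidableEq n] [CommRing R]
    [CommRing S] {φ : R →+* S} (hφ : Function.Injective φ) (A : SpecialLinearGroup n S)
    (h : ∀ i j, A i j ∈ φ.range) : ∃ B, map φ B = A := by
  choose M hM using h
  have hmap : (of M).map φ = A := by ext i j; exact hM i j
  refine ⟨⟨of M, hφ ?_⟩, Subtype.ext hmap⟩
  rw [RingHom.map_det, RingHom.mapMatrix_apply, hmap, A.2, map_one]

end Matrix.SpecialLinearGroup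

section PSL2

variable {F : Type*} [Field F]

lemma mem_center_SL2_iff {z : SL2 F} : z ∈ Subgroup.center (SL2 F) ↔ z = 1 ∨ z = -1 := by
  rw [Matrix.SpecialLinearGroup.mem_center_iff]
  constructor
  · rintro ⟨r, hr, hz⟩
    rcases (show r = 1 ∨ r = -1 by simpa using hr) with rfl | rfl
    · exact Or.inl (Subtype.ext (by simp [← hz]))
    · exact Or.inr (Subtype.ext (by simp [← hz, map_neg]))
  · rintro (rfl | rfl)
    · exact ⟨1, by simp, by simp⟩
    · exact ⟨-1, by simp, by simp [map_neg]⟩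

lemma PSL2.mk_eq_mk_iff {A B : SL2 F} : (A : PSL2 F) = B ↔ B = A ∨ B = -A := by
  rw [QuotientGroup.eq, mem_center_SL2_iff, inv_mul_eq_one, inv_mul_eq_iff_eq_mul, mul_neg_one,
    eq_comm]

lemma psl2Map_mk (σ : F →+* F) (A : SL2 F) :
    psl2Map σ A = (Matrix.SpecialLinearGroup.map σ A : PSL2 F) := rfl

lemma psl2Map_mk_eq_self_iff {σ : F →+* F} {A : SL2 F} :
    psl2Map σ A = A ↔
      Matrix.SpecialLinearGroup.map σ A = A ∨ Matrix.SpecialLinearGroup.map σ A = -A := by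
  rw [psl2Map_mk, eq_comm, PSL2.mk_eq_mk_iff]

lemma map_sl2diag {σ : F →+* F} {t : Fˣ} (ht : σ t = -t) :
    Matrix.SpecialLinearGroup.map σ (sl2diag t) = -sl2diag t := by
  apply Subtype.ext
  rw [Matrix.SpecialLinearGroup.map_apply_coe, Matrix.SpecialLinearGroup.coe_neg]
  ext i j
  fin_cases i <;> fin_cases j <;> simp [sl2diag, ht]

lemma psl2Map_mk_sl2diag {σ : F →+* F} {t : Fˣ} (ht : σ t = -t) :
    psl2Map σ (sl2diag t) = sl2diag t :=
  psl2Map_mk_eq_self_iff.mpr (Or.inr (map_sl2diag ht))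

end PSL2

section pslK

variable {K L : Type*} [Field K] [Field L] [Algebra K L]

lemma psl2Map_eq_self_of_mem_pslK (f : L ≃ₐ[K] L) {x : PSL2 L} (hx : x ∈ pslK K L) :
    psl2Map (f : L →+* L) x = x := by
  obtain ⟨B, rfl⟩ := hx
  refine psl2Map_mk_eq_self_iff.mpr (Or.inl ?_)
  ext i j
  exact f.commutes _

lemma pslK_sup_closure_le_eqLocus (f : L ≃ₐ[K] L) {d : PSL2 L}
    (hd : psl2Map (f : L →+* L) d = d) :
    pslK K L ⊔ Subgroup.closure {d} ≤ (psl2Map (f : L →+* L)).eqLocus (MonoidHom.id _) :=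
  sup_le (fun _ ↦ psl2Map_eq_self_of_mem_pslK f)
    ((Subgroup.closure_le _).mpr (Set.singleton_subset_iff.mpr hd))

lemma mk_sl2diag_notMem_pslK {t : Lˣ} (ht : (t : L) ∉ (algebraMap K L).range) :
    (sl2diag t : PSL2 L) ∉ pslK K L := by
  rintro ⟨B, hB⟩
  have hB' : ((Matrix.SpecialLinearGroup.map (algebraMap K L) B : SL2 L) : PSL2 L) =
      sl2diag t := hB
  rcases PSL2.mk_eq_mk_iff.mp hB' with h | h
  · exact ht ⟨B 0 0, by simpa [sl2diag] using congrArg (fun M : SL2 L ↦ M 0 0) h.symm⟩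
  · exact ht ⟨-B 0 0, by simpa [sl2diag] using congrArg (fun M : SL2 L ↦ M 0 0) h.symm⟩

lemma mem_pslK_or_mul_mem_pslK_of_psl2Map_eq_self {f : L ≃ₐ[K] L} {t : Lˣ}
    (hfix : ∀ x, f x = x → x ∈ (algebraMap K L).range) (ht : f t = -t) {x : PSL2 L}
    (hx : psl2Map (f : L →+* L) x = x) : x ∈ pslK K L ∨ x * (sl2diag t : PSL2 L) ∈ pslK K L := by
  have hlift (A : SL2 L) (hA : Matrix.SpecialLinearGroup.map (f : L →+* L) A = A) :
      (A : PSL2 L) ∈ pslK K L := by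
    obtain ⟨B, rfl⟩ := Matrix.SpecialLinearGroup.exists_map_eq_of_forall_mem_range
      (algebraMap K L).injective A fun i j ↦ hfix _ (congrArg (fun M : SL2 L ↦ M i j) hA)
    exact ⟨B, rfl⟩
  obtain ⟨A, rfl⟩ := QuotientGroup.mk_surjective x
  rcases psl2Map_mk_eq_self_iff.mp hx with hA | hA
  · exact Or.inl (hlift A hA)
  · refine Or.inr (hlift (A * sl2diag t) ?_)
    rw [map_mul, hA, map_sl2diag ht, neg_mul_neg]

end pslK

theorem stmt15_general {K L : Type*} [Field K] [Field L] [Algebra K L]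
    (hchar : ringChar K ≠ 2)
    (f : L ≃ₐ[K] L) (hf : f ≠ AlgEquiv.refl)
    (δ : Lˣ) (hδK : ∃ c : K, algebraMap K L c = (δ : L) ^ 2)
    (hgen : Algebra.adjoin K {(δ : L)} = ⊤) :
    psl2Map (f : L →+* L)
        (QuotientGroup.mk' (Subgroup.center (SL2 L)) (sl2diag δ)) =
      QuotientGroup.mk' (Subgroup.center (SL2 L)) (sl2diag δ) ∧
    (pslK K L).relIndex
      (pslK K L ⊔ Subgroup.closure
        {QuotientGroup.mk' (Subgroup.center (SL2 L)) (sl2diag δ)}) = 2 ∧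
    ∀ x : PSL2 L, psl2Map (f : L →+* L) x = x ↔
      x ∈ pslK K L ⊔ Subgroup.closure
        {QuotientGroup.mk' (Subgroup.center (SL2 L)) (sl2diag δ)} := by
  obtain ⟨c, hc⟩ := hδK
  have h2 : (2 : L) ≠ 0 := by
    simpa only [map_ofNat, map_zero] using (algebraMap K L).injective.ne (Ring.two_ne_zero hchar)
  have hfδ : f δ = -δ := f.apply_eq_neg_of_ne_refl hf hc hgen
  have hfix (x : L) : f x = x → x ∈ (algebraMap K L).range :=
    f.mem_range_algebraMap_of_apply_eq_self h2 hfδ hc hgen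
  have hd_fixed : psl2Map (f : L →+* L) (sl2diag δ : PSL2 L) = sl2diag δ :=
    psl2Map_mk_sl2diag hfδ
  have hd_mem : (sl2diag δ : PSL2 L) ∈ pslK K L ⊔ Subgroup.closure {(sl2diag δ : PSL2 L)} :=
    Subgroup.mem_sup_right (Subgroup.subset_closure rfl)
  have hfixed_iff (x : PSL2 L) : psl2Map (f : L →+* L) x = x ↔
      x ∈ pslK K L ⊔ Subgroup.closure {(sl2diag δ : PSL2 L)} := by
    refine ⟨fun hx ↦ ?_, fun hx ↦ ?_⟩
    · rcases mem_pslK_or_mul_mem_pslK_of_psl2Map_eq_self hfix hfδ hx with h | h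
      · exact Subgroup.mem_sup_left h
      · simpa using Subgroup.mul_mem _ (Subgroup.mem_sup_left h) (Subgroup.inv_mem _ hd_mem)
    · exact pslK_sup_closure_le_eqLocus f hd_fixed hx
  refine ⟨hd_fixed, ?_, hfixed_iff⟩
  refine Subgroup.relIndex_eq_two_iff_exists_notMem_and.mpr ⟨_, hd_mem, ?_, fun y hy ↦ ?_⟩
  · exact mk_sl2diag_notMem_pslK (f.notMem_range_algebraMap_of_apply_eq_neg h2 δ.ne_zero hfδ)
  · exact (mem_pslK_or_mul_mem_pslK_of_psl2Map_eq_self hfix hfδ ((hfixed_iff y).mpr hy)).symm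

/-- Let `K ⊆ L` be a separable field extension of degree 2 with
`char K ≠ 2`, `f` the nontrivial element of `Gal(L/K)`, and `δ ∈ L` with `δ² ∈ K` and
`L = K(δ)`. Let `d ∈ PSL₂(L)` be the image of `diag(δ, δ⁻¹)`. Then `d` is fixed by the
induced action of `f` on `PSL₂(L)`, the subgroup `⟨PSL₂(K), d⟩` contains `PSL₂(K)` with
index 2, and the fixed-point subgroup of `f` on `PSL₂(L)` equals `⟨PSL₂(K), d⟩`. -/
theorem stmt15 {K L : Type*} [Field K] [Field L] [Algebra K L]
    (hchar : ringChar K ≠ 2) [Algebra.IsSeparable K L]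
    (hdim : Module.finrank K L = 2)
    (f : L ≃ₐ[K] L) (hf : f ≠ AlgEquiv.refl)
    (δ : Lˣ) (hδK : ∃ c : K, algebraMap K L c = (δ : L) ^ 2)
    (hgen : Algebra.adjoin K {(δ : L)} = ⊤) :
    psl2Map (f : L →+* L)
        (QuotientGroup.mk' (Subgroup.center (SL2 L)) (sl2diag δ)) =
      QuotientGroup.mk' (Subgroup.center (SL2 L)) (sl2diag δ) ∧
    (pslK K L).relIndex
      (pslK K L ⊔ Subgroup.closure
        {QuotientGroup.mk' (Subgroup.center (SL2 L)) (sl2diag δ)}) = 2 ∧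
    ∀ x : PSL2 L, psl2Map (f : L →+* L) x = x ↔
      x ∈ pslK K L ⊔ Subgroup.closure
        {QuotientGroup.mk' (Subgroup.center (SL2 L)) (sl2diag δ)} :=
  stmt15_general hchar f hf δ hδK hgen
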